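/- The singular modulus for r = 5 is k₅ = √((9 + 4√5 − 2√(38 + 17√5))/(18 + 8√5)); that is, this value of k ∈ (0,1) satisfies K(√(1−k²))/K(k) = √5. -/

import Mathlib

/-!
Jacobi's transformation of order 5. There is an odd rational function `y = U(x)/D(x)` of
degree 5, with coefficients in `ℚ(√5, √(38 + 17√5))`, mapping `[0, 1)` onto itself with
`0 ↦ 0`, `1 ↦ 1`, and such that, for `m = k₅²`,
`D ∓ U = (1 ∓ x) q∓²`, `5 (D² - (1 - m) U²) = (1 - m x²) V²` and
`U' D - U D' = q₋ q₊ V`.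
Hence `dy / √((1 - y²)(1 - (1 - m) y²)) = √5 dx / √((1 - x²)(1 - m x²))`, and integrating
over `[0, 1)` (the Jacobi form of `K`, reached by `x = sin θ`) gives `K(k₅') = √5 K(k₅)`.
-/

open Real

/-- Complete elliptic integral of the first kind. -/
noncomputable def K (k : ℝ) : ℝ := ∫ t in (0:ℝ)..(π/2), 1 / Real.sqrt (1 - k^2 * Real.sin t ^ 2)

open Set Filter Topology

noncomputable section

-- Unlike `K`, these take the parameter `m = k²` rather than the modulus `k`.
def ellipticF (m φ : ℝ) : ℝ := ∫ θ in (0:ℝ)..φ, 1 / √(1 - m * sin θ ^ 2)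

def jacobiKernel (m x : ℝ) : ℝ := 1 / √((1 - x ^ 2) * (1 - m * x ^ 2))

def ellipticFJacobi (m X : ℝ) : ℝ := ∫ x in (0:ℝ)..X, jacobiKernel m x

section Legendre

variable {m : ℝ}

lemma one_sub_mul_sq_pos (hm : m < 1) {y : ℝ} (hy : y ^ 2 ≤ 1) : 0 < 1 - m * y ^ 2 := by
  rcases le_or_gt m 0 with h | h <;> nlinarith [sq_nonneg y]

lemma K_sqrt_eq_ellipticF (hm : 0 ≤ m) : K √m = ellipticF m (π / 2) := by
  rw [K, ellipticF, sq_sqrt hm]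

lemma continuous_ellipticF_integrand (hm : m < 1) :
    Continuous fun θ ↦ 1 / √(1 - m * sin θ ^ 2) :=
  continuous_const.div (by fun_prop) fun θ ↦
    (sqrt_pos.2 (one_sub_mul_sq_pos hm (sin_sq_le_one θ))).ne'

lemma continuous_ellipticF (hm : m < 1) : Continuous (ellipticF m) :=
  intervalIntegral.continuous_primitive
    (fun _ _ ↦ (continuous_ellipticF_integrand hm).intervalIntegrable _ _) 0

lemma ellipticF_pos (hm : m < 1) {φ : ℝ} (hφ : 0 < φ) : 0 < ellipticF m φ :=
  intervalIntegral.intervalIntegral_pos_of_pos_on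
    ((continuous_ellipticF_integrand hm).intervalIntegrable _ _)
    (fun θ _ ↦ one_div_pos.2 (sqrt_pos.2 (one_sub_mul_sq_pos hm (sin_sq_le_one θ)))) hφ

end Legendre

section Jacobi

variable {m : ℝ}

lemma one_sub_sq_mul_one_sub_mul_sq_pos (hm : m < 1) {x : ℝ} (hx : x ∈ Ioo (-1) 1) :
    0 < (1 - x ^ 2) * (1 - m * x ^ 2) := by
  have hx2 : x ^ 2 < 1 := by nlinarith [hx.1, hx.2]
  exact mul_pos (by linarith) (one_sub_mul_sq_pos hm hx2.le)

lemma continuousOn_jacobiKernel (hm : m < 1) : ContinuousOn (jacobiKernel m) (Ioo (-1) 1) :=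
  fun x hx ↦ ContinuousAt.continuousWithinAt <| continuousAt_const.div (by fun_prop)
    (sqrt_pos.2 (one_sub_sq_mul_one_sub_mul_sq_pos hm hx)).ne'

lemma ellipticF_eq_ellipticFJacobi_sin (hm : m < 1) {φ : ℝ}
    (hφ : φ ∈ Ioo (-(π / 2)) (π / 2)) :
    ellipticF m φ = ellipticFJacobi m (sin φ) := by
  have hsub : uIcc 0 φ ⊆ Ioo (-(π / 2)) (π / 2) :=
    ordConnected_Ioo.uIcc_subset ⟨by linarith [pi_pos], by linarith [pi_pos]⟩ hφ
  have hsin : MapsTo sin (Ioo (-(π / 2)) (π / 2)) (Ioo (-1) 1) := fun θ hθ ↦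
    ⟨by simpa using sin_lt_sin_of_lt_of_le_pi_div_two le_rfl hθ.2.le hθ.1,
      by simpa using sin_lt_sin_of_lt_of_le_pi_div_two hθ.1.le le_rfl hθ.2⟩
  have key := intervalIntegral.integral_comp_mul_deriv' (fun θ _ ↦ hasDerivAt_sin θ)
    continuous_cos.continuousOn
    ((continuousOn_jacobiKernel hm).mono (hsin.mono_left hsub).image_subset)
  rw [sin_zero] at key
  rw [ellipticFJacobi, ← key, ellipticF]
  refine intervalIntegral.integral_congr fun θ hθ ↦ ?_
  have hcos : 0 < cos θ := cos_pos_of_mem_Ioo (hsub hθ)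
  rw [Function.comp_apply, jacobiKernel, ← cos_sq', sqrt_mul (sq_nonneg _), sqrt_sq hcos.le]
  field_simp

lemma tendsto_ellipticFJacobi_nhdsLT_one (hm₀ : 0 ≤ m) (hm : m < 1) :
    Tendsto (ellipticFJacobi m) (𝓝[<] 1) (𝓝 (K √m)) := by
  have hlim : Tendsto (ellipticF m ∘ arcsin) (𝓝[<] 1) (𝓝 (K √m)) := by
    rw [K_sqrt_eq_ellipticF hm₀, ← arcsin_one]
    exact ((continuous_ellipticF hm).comp continuous_arcsin).continuousAt.continuousWithinAt
  refine hlim.congr'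
    (eventually_of_mem (Ioo_mem_nhdsLT (by norm_num : (-1 : ℝ) < 1)) fun x hx ↦ ?_)
  rw [Function.comp_apply, ellipticF_eq_ellipticFJacobi_sin hm, sin_arcsin hx.1.le hx.2.le]
  exact ⟨neg_pi_div_two_lt_arcsin.2 hx.1, arcsin_lt_pi_div_two.2 hx.2⟩

end Jacobi

section Transformation

variable {k l M : ℝ}

lemma ellipticFJacobi_comp {φ φ' : ℝ → ℝ} (hl : l < 1)
    (hφ : ∀ x ∈ Ico (0:ℝ) 1, HasDerivAt φ (φ' x) x) (hφ' : ContinuousOn φ' (Ico 0 1))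
    (hφ₀ : φ 0 = 0) (hmaps : MapsTo φ (Ico 0 1) (Ico 0 1))
    (hkernel : ∀ x ∈ Ico (0:ℝ) 1, jacobiKernel l (φ x) * φ' x = M * jacobiKernel k x)
    {X : ℝ} (hX : X ∈ Ico 0 1) :
    ellipticFJacobi l (φ X) = M * ellipticFJacobi k X := by
  have hsub : uIcc 0 X ⊆ Ico 0 1 := ordConnected_Ico.uIcc_subset ⟨le_rfl, one_pos⟩ hX
  have hcont : ContinuousOn (jacobiKernel l) (φ '' uIcc 0 X) :=
    (continuousOn_jacobiKernel hl).mono ((hmaps.mono_left hsub).image_subset.trans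
      fun y hy ↦ ⟨by linarith [hy.1], hy.2⟩)
  have hsubst :=
    intervalIntegral.integral_comp_mul_deriv' (fun x hx ↦ hφ x (hsub hx)) (hφ'.mono hsub) hcont
  rw [hφ₀] at hsubst
  rw [ellipticFJacobi, ellipticFJacobi, ← hsubst, ← intervalIntegral.integral_const_mul]
  exact intervalIntegral.integral_congr fun x hx ↦ hkernel x (hsub hx)

theorem K_sqrt_eq_mul_of_jacobiKernel_comp {φ φ' : ℝ → ℝ} (hk₀ : 0 ≤ k) (hk : k < 1)
    (hl₀ : 0 ≤ l) (hl : l < 1)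
    (hφ : ∀ x ∈ Ico (0:ℝ) 1, HasDerivAt φ (φ' x) x) (hφ' : ContinuousOn φ' (Ico 0 1))
    (hφ₀ : φ 0 = 0) (hφ₁ : Tendsto φ (𝓝[<] 1) (𝓝 1))
    (hmaps : MapsTo φ (Ico 0 1) (Ico 0 1))
    (hkernel : ∀ x ∈ Ico (0:ℝ) 1, jacobiKernel l (φ x) * φ' x = M * jacobiKernel k x) :
    K √l = M * K √k := by
  have hIco : Ico (0:ℝ) 1 ∈ 𝓝[<] 1 := Ico_mem_nhdsLT one_pos
  have hφ₁' : Tendsto φ (𝓝[<] 1) (𝓝[<] 1) :=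
    tendsto_nhdsWithin_iff.2 ⟨hφ₁, eventually_of_mem hIco fun x hx ↦ (hmaps hx).2⟩
  refine tendsto_nhds_unique ((tendsto_ellipticFJacobi_nhdsLT_one hl₀ hl).comp hφ₁') ?_
  refine ((tendsto_ellipticFJacobi_nhdsLT_one hk₀ hk).const_mul M).congr'
    (eventually_of_mem hIco fun X hX ↦ ?_)
  exact (ellipticFJacobi_comp hl hφ hφ' hφ₀ hmaps hkernel hX).symm

lemma jacobiKernel_div_mul {u d p v x : ℝ} (hM : 0 < M) (hd : d ≠ 0) (hpv : 0 < p * v)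
    (hx : 0 < (1 - x ^ 2) * (1 - k * x ^ 2))
    (h₁ : d ^ 2 - u ^ 2 = (1 - x ^ 2) * p ^ 2)
    (h₂ : M ^ 2 * (d ^ 2 - l * u ^ 2) = (1 - k * x ^ 2) * v ^ 2) :
    jacobiKernel l (u / d) * (p * v / d ^ 2) = M * jacobiKernel k x := by
  have key : (1 - (u / d) ^ 2) * (1 - l * (u / d) ^ 2)
      = (p * v / (M * d ^ 2)) ^ 2 * ((1 - x ^ 2) * (1 - k * x ^ 2)) := by
    field_simp
    linear_combination (M ^ 2 * (d ^ 2 - l * u ^ 2)) * h₁ + (1 - x ^ 2) * p ^ 2 * h₂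
  have hpos : 0 < p * v / (M * d ^ 2) := by positivity
  rw [jacobiKernel, jacobiKernel, key, sqrt_mul (sq_nonneg _), sqrt_sq hpos.le]
  have hA := (sqrt_pos.2 hx).ne'
  generalize √((1 - x ^ 2) * (1 - k * x ^ 2)) = A at hA ⊢
  field_simp
  exact div_self hpv.ne'

end Transformation

namespace SingularModulusFive

def t : ℝ := √(38 + 17 * √5)

def m : ℝ := (9 + 4 * √5 - 2 * t) / (18 + 8 * √5)

-- Coefficients of the order-5 transformation `x ↦ num x / den x` taking `m` to `1 - m`.
def a₁ : ℝ := ((7 * √5 - 15) * t - 2 * √5) / 2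
def a₂ : ℝ := (3 * √5 - 1 + (15 - 7 * √5) * t) / 4
def b₁ : ℝ := (25 - 11 * √5) * t / 2
def b₂ : ℝ := (3 * √5 - 5 + (29 * √5 - 65) * t) / 4
def c₁ : ℝ := (√5 - 1) / 2
def c₂ : ℝ := ((25 - 11 * √5) * t - 1 - √5) / 4
def e₁ : ℝ := (65 - 29 * √5) * t / 2 - √5

def num (x : ℝ) : ℝ := √5 * x + a₁ * x ^ 3 + a₂ * x ^ 5
def den (x : ℝ) : ℝ := 1 + b₁ * x ^ 2 + b₂ * x ^ 4
def qMinus (x : ℝ) : ℝ := 1 - c₁ * x + c₂ * x ^ 2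
def qPlus (x : ℝ) : ℝ := 1 + c₁ * x + c₂ * x ^ 2
def V (x : ℝ) : ℝ := √5 + e₁ * x ^ 2 + b₂ * x ^ 4

lemma sqrt_five_sq : √5 ^ 2 = 5 := sq_sqrt (by norm_num)
lemma sqrt_five_gt : 2.2360679 < √5 := by nlinarith [sqrt_five_sq, sqrt_nonneg 5]
lemma sqrt_five_lt : √5 < 2.2360680 := by nlinarith [sqrt_five_sq, sqrt_nonneg 5]
lemma t_sq : t ^ 2 = 38 + 17 * √5 := sq_sqrt (by linarith [sqrt_five_gt])
lemma t_pos : 0 < t := sqrt_pos.2 (by positivity)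
lemma t_gt : 8.7185523 < t := by nlinarith [t_sq, t_pos, sqrt_five_gt]
lemma t_lt : t < 8.7185526 := by nlinarith [t_sq, t_pos, sqrt_five_lt]

lemma a₁_pos : 0 < a₁ := by unfold a₁; nlinarith [sqrt_five_gt, sqrt_five_lt, t_gt, t_lt]
lemma a₂_pos : 0 < a₂ := by unfold a₂; nlinarith [sqrt_five_gt, sqrt_five_lt, t_gt, t_lt]
lemma b₁_pos : 0 < b₁ := by unfold b₁; nlinarith [sqrt_five_gt, sqrt_five_lt, t_gt, t_lt]
lemma b₂_pos : 0 < b₂ := by unfold b₂; nlinarith [sqrt_five_gt, sqrt_five_lt, t_gt, t_lt]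
lemma c₁_pos : 0 < c₁ := by unfold c₁; linarith [sqrt_five_gt]
lemma c₁_lt_one : c₁ < 1 := by unfold c₁; linarith [sqrt_five_lt]
lemma c₂_pos : 0 < c₂ := by unfold c₂; nlinarith [sqrt_five_gt, sqrt_five_lt, t_gt, t_lt]
lemma e₁_neg : e₁ < 0 := by unfold e₁; nlinarith [sqrt_five_gt, sqrt_five_lt, t_gt, t_lt]
lemma sqrt_five_add_e₁_pos : 0 < √5 + e₁ := by
  unfold e₁; nlinarith [sqrt_five_gt, sqrt_five_lt, t_gt, t_lt]

lemma m_pos : 0 < m := div_pos (by linarith [sqrt_five_gt, t_lt]) (by linarith [sqrt_five_gt])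
lemma m_lt_one : m < 1 :=
  (div_lt_one (by linarith [sqrt_five_gt])).2 (by linarith [sqrt_five_gt, t_gt])

lemma den_sub_num (x : ℝ) : den x - num x = (1 - x) * qMinus x ^ 2 := by
  have := sqrt_five_sq; have := t_sq
  unfold den num qMinus a₁ a₂ b₁ b₂ c₁ c₂; grind

lemma den_add_num (x : ℝ) : den x + num x = (1 + x) * qPlus x ^ 2 := by
  have := sqrt_five_sq; have := t_sq
  unfold den num qPlus a₁ a₂ b₁ b₂ c₁ c₂; grind

lemma den_sq_sub_num_sq (x : ℝ) :
    den x ^ 2 - num x ^ 2 = (1 - x ^ 2) * (qMinus x * qPlus x) ^ 2 := by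
  linear_combination (den x + num x) * den_sub_num x + (1 - x) * qMinus x ^ 2 * den_add_num x

lemma five_mul_den_sq_sub (x : ℝ) :
    √5 ^ 2 * (den x ^ 2 - (1 - m) * num x ^ 2) = (1 - m * x ^ 2) * V x ^ 2 := by
  have := sqrt_five_sq; have := t_sq
  have h : 18 + 8 * √5 ≠ 0 := by linarith [sqrt_five_gt]
  unfold den num V m a₁ a₂ b₁ b₂ e₁
  field_simp
  grind

lemma deriv_num_mul_den_sub_num_mul_deriv_den (x : ℝ) :
    (√5 + 3 * a₁ * x ^ 2 + 5 * a₂ * x ^ 4) * den x - num x * (2 * b₁ * x + 4 * b₂ * x ^ 3)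
      = qMinus x * qPlus x * V x := by
  have := sqrt_five_sq; have := t_sq
  unfold den num qMinus qPlus V a₁ a₂ b₁ b₂ c₁ c₂ e₁; grind

lemma den_pos (x : ℝ) : 0 < den x := by
  unfold den; nlinarith [b₁_pos, b₂_pos, sq_nonneg x, pow_two_nonneg (x ^ 2)]

lemma num_nonneg {x : ℝ} (hx : 0 ≤ x) : 0 ≤ num x := by
  unfold num; have := a₁_pos; have := a₂_pos; positivity

lemma qMinus_pos {x : ℝ} (hx : x ≤ 1) : 0 < qMinus x := by
  unfold qMinus
  nlinarith [c₁_lt_one, mul_nonneg c₁_pos.le (sub_nonneg.2 hx), c₂_pos, sq_nonneg x]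

lemma qPlus_pos {x : ℝ} (hx : 0 ≤ x) : 0 < qPlus x := by
  unfold qPlus; have := c₁_pos; have := c₂_pos; positivity

lemma V_pos {x : ℝ} (hx : x ^ 2 ≤ 1) : 0 < V x := by
  unfold V
  nlinarith [sqrt_five_add_e₁_pos, mul_le_mul_of_nonpos_left hx e₁_neg.le, b₂_pos,
    pow_two_nonneg (x ^ 2)]

lemma hasDerivAt_num_div_den (x : ℝ) :
    HasDerivAt (fun y ↦ num y / den y) (qMinus x * qPlus x * V x / den x ^ 2) x := by
  have hnum : HasDerivAt num (√5 + 3 * a₁ * x ^ 2 + 5 * a₂ * x ^ 4) x :=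
    ((((hasDerivAt_id x).const_mul √5).add ((hasDerivAt_pow 3 x).const_mul a₁)).add
      ((hasDerivAt_pow 5 x).const_mul a₂)).congr_deriv (by norm_num; ring)
  have hden : HasDerivAt den (2 * b₁ * x + 4 * b₂ * x ^ 3) x :=
    (((hasDerivAt_const x 1).add ((hasDerivAt_pow 2 x).const_mul b₁)).add
      ((hasDerivAt_pow 4 x).const_mul b₂)).congr_deriv (by norm_num; ring)
  rw [← deriv_num_mul_den_sub_num_mul_deriv_den]
  exact hnum.div hden (den_pos x).ne'

lemma continuous_num_div_den : Continuous fun x ↦ num x / den x :=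
  (by unfold num; fun_prop : Continuous num).div (by unfold den; fun_prop) fun x ↦ (den_pos x).ne'

lemma tendsto_num_div_den_nhdsLT_one : Tendsto (fun x ↦ num x / den x) (𝓝[<] 1) (𝓝 1) := by
  have h₁ : num 1 / den 1 = 1 := by
    rw [div_eq_one_iff_eq (den_pos 1).ne']
    linear_combination -den_sub_num 1
  have := continuous_num_div_den.tendsto 1
  rw [h₁] at this
  exact this.mono_left nhdsWithin_le_nhds

lemma mapsTo_num_div_den : MapsTo (fun x ↦ num x / den x) (Ico 0 1) (Ico 0 1) := by
  intro x hx
  refine ⟨div_nonneg (num_nonneg hx.1) (den_pos x).le, (div_lt_one (den_pos x)).2 ?_⟩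
  linarith [den_sub_num x, mul_pos (sub_pos.2 hx.2) (pow_pos (qMinus_pos hx.2.le) 2)]

lemma jacobiKernel_num_div_den_mul {x : ℝ} (hx : x ∈ Ico 0 1) :
    jacobiKernel (1 - m) (num x / den x) * (qMinus x * qPlus x * V x / den x ^ 2)
      = √5 * jacobiKernel m x :=
  jacobiKernel_div_mul (sqrt_pos.2 (by norm_num)) (den_pos x).ne'
    (mul_pos (mul_pos (qMinus_pos hx.2.le) (qPlus_pos hx.1)) (V_pos (pow_le_one₀ hx.1 hx.2.le)))
    (one_sub_sq_mul_one_sub_mul_sq_pos m_lt_one ⟨by linarith [hx.1], hx.2⟩)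
    (den_sq_sub_num_sq x) (five_mul_den_sq_sub x)

theorem K_sqrt_one_sub_m : K √(1 - m) = √5 * K √m := by
  have hderiv : ContinuousOn (fun x ↦ qMinus x * qPlus x * V x / den x ^ 2) (Ico 0 1) :=
    (Continuous.continuousOn (by unfold qMinus qPlus V; fun_prop)).div
      (Continuous.continuousOn (by unfold den; fun_prop)) fun x _ ↦ (pow_pos (den_pos x) 2).ne'
  exact K_sqrt_eq_mul_of_jacobiKernel_comp m_pos.le m_lt_one (by linarith [m_lt_one])
    (by linarith [m_pos]) (fun x _ ↦ hasDerivAt_num_div_den x) hderiv (by simp [num])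
    tendsto_num_div_den_nhdsLT_one mapsTo_num_div_den fun _ ↦ jacobiKernel_num_div_den_mul

end SingularModulusFive

end

open SingularModulusFive in
theorem singular_modulus_five :
    Real.sqrt ((9 + 4 * Real.sqrt 5 - 2 * Real.sqrt (38 + 17 * Real.sqrt 5)) /
        (18 + 8 * Real.sqrt 5)) ∈ Set.Ioo (0:ℝ) 1 ∧
    K (Real.sqrt (1 - (Real.sqrt ((9 + 4 * Real.sqrt 5 - 2 * Real.sqrt (38 + 17 * Real.sqrt 5)) /
          (18 + 8 * Real.sqrt 5)))^2)) /
      K (Real.sqrt ((9 + 4 * Real.sqrt 5 - 2 * Real.sqrt (38 + 17 * Real.sqrt 5)) /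
          (18 + 8 * Real.sqrt 5))) = Real.sqrt 5 := by
  change √m ∈ Ioo 0 1 ∧ K √(1 - √m ^ 2) / K √m = √5
  have hK : 0 < K √m := K_sqrt_eq_ellipticF m_pos.le ▸ ellipticF_pos m_lt_one (by positivity)
  refine ⟨⟨sqrt_pos.2 m_pos, (sqrt_lt' one_pos).2 (by simpa using m_lt_one)⟩, ?_⟩
  rw [sq_sqrt m_pos.le, K_sqrt_one_sub_m, mul_div_cancel_right₀ _ hK.ne']
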